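/- arXiv:2208.05498 — 3 statements merged into one kernel-verified Lean document; each statement's English description precedes it below -/
import Mathlib

section
/- Suppose ε > 0, λ₀ > 0, λ > 0, μ = λ²/λ₀ − λ, and γβ̄ satisfies ε ≤ γβ̄ ≤ 4 − 2λ₀ − ε. Define θ̂ = 2λ + 2μ − γβ̄λ² and θ = (4 − γβ̄)(λ + μ) − 2λ². Then θ̂/θ = (2 − λ₀γβ̄)/(4 − γβ̄ − 2λ₀) ≥ λ₀ε/4 > 0. -/
theorem thetaHat_div_theta_bound
    (eps lam0 lam mu gb : ℝ) (heps : 0 < eps) (hlam0 : 0 < lam0) (hlam : 0 < lam)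
    (hmu : mu = lam ^ 2 / lam0 - lam)
    (hlow : eps ≤ gb) (hhigh : gb ≤ 4 - 2 * lam0 - eps)
    (thetaHat theta : ℝ)
    (hthetaHat : thetaHat = 2 * lam + 2 * mu - gb * lam ^ 2)
    (htheta : theta = (4 - gb) * (lam + mu) - 2 * lam ^ 2) :
    thetaHat / theta = (2 - lam0 * gb) / (4 - gb - 2 * lam0) ∧
    thetaHat / theta ≥ lam0 * eps / 4 ∧ (0:ℝ) < lam0 * eps / 4 := by
  have hl0 : lam0 ≠ 0 := ne_of_gt hlam0
  have hD : 0 < 4 - gb - 2 * lam0 := by linarith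
  have hth : theta = lam ^ 2 * (4 - gb - 2 * lam0) / lam0 := by
    rw [htheta, hmu]; field_simp; ring
  have hhat : thetaHat = lam ^ 2 * (2 - lam0 * gb) / lam0 := by
    rw [hthetaHat, hmu]; field_simp; ring
  have htpos : 0 < theta := by rw [hth]; positivity
  have heq : thetaHat / theta = (2 - lam0 * gb) / (4 - gb - 2 * lam0) := by
    rw [hth, hhat, div_eq_div_iff (by positivity) (ne_of_gt hD)]
    field_simp
  refine ⟨heq, ?_, by positivity⟩
  rw [heq, ge_iff_le, div_le_div_iff₀ (by norm_num) hD]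
  nlinarith [mul_pos hlam0 heps, sq_nonneg (1 - lam0)]
end

section
/- Suppose ε > 0, λ₀ > 0, λ > 0, μ = λ²/λ₀ − λ, and γβ̄ satisfies ε ≤ γβ̄ ≤ 4 − 2λ₀ − ε. Define θ̃ = (λ + μ)γβ̄ and θ̂ = 2λ + 2μ − γβ̄λ². Then θ̃/θ̂ ≤ 4/(λ₀ε), λ²/θ̂ ≤ 1/ε, |θ̄/θ| ≤ |1 − λ₀|/ε where θ̄ = λ + μ − λ² and θ = (4 − γβ̄)(λ + μ) − 2λ², and |(2 − γβ̄)(λ + μ)/θ| ≤ 2/ε. -/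
theorem boundedness_of_coefficients
    (eps lam0 lam mu gb : ℝ) (heps : 0 < eps) (hlam0 : 0 < lam0) (hlam : 0 < lam)
    (hmu : mu = lam ^ 2 / lam0 - lam)
    (hlow : eps ≤ gb) (hhigh : gb ≤ 4 - 2 * lam0 - eps)
    (theta thetaHat thetaBar thetaTilde : ℝ)
    (htheta : theta = (4 - gb) * (lam + mu) - 2 * lam ^ 2)
    (hthetaHat : thetaHat = 2 * lam + 2 * mu - gb * lam ^ 2)
    (hthetaBar : thetaBar = lam + mu - lam ^ 2)
    (hthetaTilde : thetaTilde = (lam + mu) * gb) :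
    thetaTilde / thetaHat ≤ 4 / (lam0 * eps) ∧
    lam ^ 2 / thetaHat ≤ 1 / eps ∧
    |thetaBar / theta| ≤ |1 - lam0| / eps ∧
    |((2 - gb) * (lam + mu)) / theta| ≤ 2 / eps := by
  have hs : lam + mu = lam ^ 2 / lam0 := by rw [hmu]; ring
  have hsp : 0 < lam + mu := by rw [hs]; positivity
  have hl2 : lam ^ 2 = lam0 * (lam + mu) := by
    rw [hs]; field_simp
  have htheta' : theta = (lam + mu) * (4 - gb - 2 * lam0) := by
    rw [htheta, hl2]; ring
  have hthetaHat' : thetaHat = (lam + mu) * (2 - gb * lam0) := by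
    rw [hthetaHat, hl2]; ring
  have hthetaBar' : thetaBar = (lam + mu) * (1 - lam0) := by
    rw [hthetaBar, hl2]; ring
  have hden : eps ≤ 4 - gb - 2 * lam0 := by linarith
  have hthetapos : 0 < theta := by rw [htheta']; nlinarith
  have hkey : eps * lam0 ≤ 2 - gb * lam0 := by nlinarith [sq_nonneg (lam0 - 1)]
  have hfac : 0 < 2 - gb * lam0 := lt_of_lt_of_le (mul_pos heps hlam0) hkey
  have hthetaHatpos : 0 < thetaHat := by rw [hthetaHat']; exact mul_pos hsp hfac
  refine ⟨?_, ?_, ?_, ?_⟩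
  · rw [div_le_div_iff₀ hthetaHatpos (by positivity)]
    rw [hthetaTilde, hthetaHat']
    nlinarith [mul_nonneg (mul_nonneg (by linarith : (0:ℝ) ≤ 4 - gb) (mul_pos hlam0 heps).le) hsp.le,
      mul_nonneg (by linarith : (0:ℝ) ≤ 2 - gb * lam0 - eps * lam0) hsp.le]
  · rw [div_le_div_iff₀ hthetaHatpos heps, hthetaHat', hl2]
    nlinarith [mul_pos hsp hlam0]
  · rw [abs_div, abs_of_pos hthetapos, div_le_div_iff₀ hthetapos heps,
      hthetaBar', abs_mul, abs_of_pos hsp, htheta']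
    have h1 : 0 ≤ |1 - lam0| := abs_nonneg _
    nlinarith [mul_nonneg h1 hsp.le]
  · rw [abs_div, abs_of_pos hthetapos, div_le_div_iff₀ hthetapos heps,
      abs_mul, abs_of_pos hsp, htheta']
    have h2 : |2 - gb| ≤ 2 := by
      rw [abs_le]; constructor <;> nlinarith
    nlinarith [abs_nonneg (2 - gb), mul_le_mul_of_nonneg_right h2 hsp.le]
end

section
/- Let H be a real Hilbert space, M a bounded self-adjoint strongly positive linear operator, β̄ ≥ β > 0, and suppose C : H → H is (1/β)-cocoercive w.r.t. ‖·‖_M, i.e. β⟨Cx − Cy, x − y⟩ ≥ ‖Cx − Cy‖²_{M⁻¹} for all x, y. Let A be monotone, x* satisfy −Cx* ∈ Ax*, and suppose (Mzₙ − Mpₙ)/γₙ − Cyₙ ∈ A pₙ with γₙ > 0. Then φₙ := ⟨(zₙ − pₙ)/γₙ, pₙ − x*⟩_M + (β̄/4)‖yₙ − pₙ‖²_M ≥ (β̄/4)‖(2/β̄)(Cyₙ − Cx*) + M(pₙ − yₙ)‖²_{M⁻¹} + ((β̄ − β)/(β̄β))‖Cyₙ − Cx*‖²_{M⁻¹} ≥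 0. -/
open RealInnerProductSpace

theorem phi_lower_bound
    {H : Type*} [NormedAddCommGroup H] [InnerProductSpace ℝ H]
    (A : H → Set H) (M Minv : H →L[ℝ] H)
    (hA : ∀ x y u v : H, u ∈ A x → v ∈ A y → ⟪u - v, x - y⟫ ≥ 0)
    (hMsa : ∀ x y : H, ⟪M x, y⟫ = ⟪x, M y⟫)
    (hMpos : ∃ c : ℝ, 0 < c ∧ ∀ x : H, ⟪x, M x⟫ ≥ c * ‖x‖ ^ 2)
    (hMinv : ∀ x : H, Minv (M x) = x) (hMinv' : ∀ x : H, M (Minv x) = x)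
    (β βbar : ℝ) (hβ : 0 < β) (hβbar : β ≤ βbar)
    (C : H → H)
    (hcoco : ∀ x y : H, β * ⟪C x - C y, x - y⟫ ≥ ⟪C x - C y, Minv (C x - C y)⟫)
    (xs : H) (hxs : -C xs ∈ A xs)
    (γn : ℝ) (hγn : 0 < γn)
    (pn zn yn : H)
    (hinc : (1 / γn) • (M zn - M pn) - C yn ∈ A pn) :
    ⟪(1 / γn) • (zn - pn), M (pn - xs)⟫ + (βbar / 4) * ⟪yn - pn, M (yn - pn)⟫
      ≥ (βbar / 4) *
          ⟪(2 / βbar) • (C yn - C xs) + M (pn - yn),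
            Minv ((2 / βbar) • (C yn - C xs) + M (pn - yn))⟫
        + ((βbar - β) / (βbar * β)) * ⟪C yn - C xs, Minv (C yn - C xs)⟫ ∧
    (βbar / 4) *
          ⟪(2 / βbar) • (C yn - C xs) + M (pn - yn),
            Minv ((2 / βbar) • (C yn - C xs) + M (pn - yn))⟫
        + ((βbar - β) / (βbar * β)) * ⟪C yn - C xs, Minv (C yn - C xs)⟫ ≥ 0 := by
  obtain ⟨c0, hc0, hpos⟩ := hMpos
  have hβbar0 : 0 < βbar := lt_of_lt_of_le hβ hβbar
  set w : H := C yn - C xs with hw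
  set q : H := pn - yn with hq
  -- nonnegativity of the Minv quadratic form
  have hnn : ∀ x : H, 0 ≤ ⟪x, Minv x⟫ := by
    intro x
    have h1 : ⟪x, Minv x⟫ = ⟪Minv x, M (Minv x)⟫ := by
      nth_rewrite 1 [← hMinv' x]
      exact hMsa (Minv x) (Minv x)
    rw [h1]
    have h2 := hpos (Minv x)
    nlinarith [sq_nonneg ‖Minv x‖, norm_nonneg (Minv x)]
  -- scalar abbreviations
  set a : ℝ := ⟪w, Minv w⟫ with ha
  set b : ℝ := ⟪w, q⟫ with hb
  set cc : ℝ := ⟪q, M q⟫ with hcc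
  have ha0 : 0 ≤ a := hnn w
  -- the inner product with yn - pn equals cc
  have hflip : ⟪yn - pn, M (yn - pn)⟫ = cc := by
    have : yn - pn = -q := by rw [hq]; abel
    rw [this, map_neg, inner_neg_neg, hcc]
  -- cross term
  have hcross : ⟪M q, Minv w⟫ = b := by
    rw [hMsa q (Minv w), hMinv' w, real_inner_comm, hb]
  -- expansion of the big quadratic
  have hE : ⟪(2 / βbar) • w + M q, Minv ((2 / βbar) • w + M q)⟫
      = (2 / βbar) ^ 2 * a + (4 / βbar) * b + cc := by
    rw [map_add, map_smul, inner_add_left, inner_add_right, inner_add_right,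
      real_inner_smul_left, real_inner_smul_left, real_inner_smul_right,
      real_inner_smul_right, hMinv, hcross]
    have h1 : ⟪M q, q⟫ = cc := by rw [hMsa q q]
    rw [h1, ← hb]
    ring
  -- monotonicity
  have hmono := hA pn xs _ _ hinc hxs
  have hT1 : ⟪(1 / γn) • (zn - pn), M (pn - xs)⟫
      = ⟪(1 / γn) • (M zn - M pn), pn - xs⟫ := by
    rw [real_inner_smul_left, real_inner_smul_left, ← map_sub, ← hMsa]
  have hmono' : ⟪(1 / γn) • (M zn - M pn), pn - xs⟫ ≥ ⟪w, pn - xs⟫ := by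
    have heq : (1 / γn) • (M zn - M pn) - C yn - -C xs
        = (1 / γn) • (M zn - M pn) - w := by rw [hw]; abel
    rw [heq, inner_sub_left] at hmono
    linarith
  -- cocoercivity
  have hco := hcoco yn xs
  have hsplit : ⟪w, pn - xs⟫ = b + ⟪w, yn - xs⟫ := by
    have : pn - xs = q + (yn - xs) := by rw [hq]; abel
    rw [this, inner_add_right, hb]
  have hTb : ⟪(1 / γn) • (zn - pn), M (pn - xs)⟫ ≥ b + a / β := by
    rw [hT1]
    have h3 : ⟪w, yn - xs⟫ ≥ a / β := by
      rw [ge_iff_le, div_le_iff₀ hβ]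
      nlinarith [hco]
    linarith [hmono', hsplit.ge, hsplit.le, h3]
  -- RHS algebraic identity
  have hrhs : (βbar / 4) * ((2 / βbar) ^ 2 * a + (4 / βbar) * b + cc)
      + ((βbar - β) / (βbar * β)) * a = a / β + b + (βbar / 4) * cc := by
    field_simp
    ring
  constructor
  · rw [hflip, hE, hrhs]
    linarith [hTb]
  · have hEnn := hnn ((2 / βbar) • w + M q)
    have hc1 : (0:ℝ) ≤ (βbar - β) / (βbar * β) :=
      div_nonneg (by linarith) (by positivity)
    nlinarith [mul_nonneg (le_of_lt (by positivity : (0:ℝ) < βbar / 4)) hEnn,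
      mul_nonneg hc1 ha0]
end
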